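/- Let k ≥ 4, and let L: ({0,1}^n)^t → ({0,1})^t be a t-repeated k-non-signaling function that is permutation folded, (1-ε₁)-linear, and (1-ε₂)-consistent. Then the flattening flat(L): {0,1}^n → {0,1} is an (ε₂, t)-almost-non-signaling function that is (1-ε₁-3ε₂)-linear, i.e., for all x, y ∈ {0,1}^n and all query sets S of size at most t containing x, y, x+y, Pr[flat(L)(x) + flat(L)(y) = flat(L)(x+y)] ≥ 1-ε₁-3ε₂ (addition mod 2). -/

import Mathlib

/-! Both claims are read off a single query set `U` of at most four query vectors to `L`, which
by non-signaling reproduces the distribution of every flattened query it contains. Permutation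
folding makes the answers to `Q` and to a coordinate permutation `permQ ρ Q` permuted copies of
each other almost surely, and consistency ties the answers to two query vectors together at the
coordinates where those agree. So the answers to `x ∈ S ∩ T` read from the flattened queries of
`S` and of `T` coincide except with probability `ε₂`, and the flattened linearity test at
`x, y, x + y` is implied by one linearity test of `L` together with one consistency test, which
costs `ε₁ + ε₂`. -/

noncomputable def prob {α : Type*} (p : PMF α) (E : Set α) : ℝ :=
  (p.toOuterMeasure E).toReal

def restrictAssign {D A : Type*} {S T : Finset D} (h : T ⊆ S)
    (f : {x // x ∈ S} → A) : {x // x ∈ T} → A :=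
  fun x => f ⟨x.1, h x.2⟩

noncomputable def marginal {D A : Type*} {S : Finset D} (p : PMF ({x // x ∈ S} → A))
    {T : Finset D} (h : T ⊆ S) : PMF ({x // x ∈ T} → A) :=
  p.map (restrictAssign h)

def IsNonSignaling {D A : Type*} [DecidableEq D] (k : ℕ)
    (F : (S : Finset D) → PMF ({x // x ∈ S} → A)) : Prop :=
  ∀ S T : Finset D, S.card ≤ k → T.card ≤ k →
    marginal (F S) (Finset.inter_subset_left : S ∩ T ⊆ S) =
    marginal (F T) (Finset.inter_subset_right : S ∩ T ⊆ T)

/-- An `(ε, k)`-almost-non-signaling function: marginals on intersections of query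
sets of size at most `k` are `ε`-close in total variation distance. -/
def IsAlmostNonSignaling {D A : Type*} [DecidableEq D] (ε : ℝ) (k : ℕ)
    (F : (S : Finset D) → PMF ({x // x ∈ S} → A)) : Prop :=
  ∀ S T : Finset D, S.card ≤ k → T.card ≤ k →
    ∀ E : Set ({x // x ∈ S ∩ T} → A),
      |prob (marginal (F S) (Finset.inter_subset_left : S ∩ T ⊆ S)) E -
       prob (marginal (F T) (Finset.inter_subset_right : S ∩ T ⊆ T)) E| ≤ ε

def permQ {t : ℕ} {β : Type*} (π : Equiv.Perm (Fin t)) (Q : Fin t → β) : Fin t → β :=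
  fun j => Q (π j)

def IsPermFolded {t : ℕ} {D A : Type*} [DecidableEq D] (k : ℕ)
    (F : (S : Finset (Fin t → D)) → PMF ({Q // Q ∈ S} → (Fin t → A))) : Prop :=
  ∀ (ℓ : ℕ) (Q : Fin ℓ → (Fin t → D)) (π : Fin ℓ → Equiv.Perm (Fin t))
    (b : Fin ℓ → (Fin t → A)), ℓ ≤ k →
    prob (F (Finset.image Q Finset.univ))
      {f | ∀ i : Fin ℓ, f ⟨Q i, Finset.mem_image_of_mem _ (Finset.mem_univ i)⟩ = b i} =
    prob (F (Finset.image (fun i => permQ (π i) (Q i)) Finset.univ))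
      {f | ∀ i : Fin ℓ, f ⟨permQ (π i) (Q i),
          Finset.mem_image_of_mem _ (Finset.mem_univ i)⟩ = permQ (π i) (b i)}

def IsConsistentRep {t : ℕ} {D A : Type*} [DecidableEq D] (ε : ℝ)
    (F : (S : Finset (Fin t → D)) → PMF ({Q // Q ∈ S} → (Fin t → A))) : Prop :=
  ∀ Q Q' : Fin t → D,
    prob (F {Q, Q'})
      {f | ∀ j : Fin t, Q j = Q' j →
        f ⟨Q, by simp⟩ j = f ⟨Q', by simp⟩ j} ≥ 1 - ε

noncomputable def padVec {D : Type*} [Inhabited D] (t : ℕ) (S : Finset D) : Fin t → D :=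
  fun j => if h : (j : ℕ) < S.toList.length then S.toList.get ⟨j, h⟩ else default

/-- The flattening of a `t`-repeated non-signaling function: a query set `S` is answered
via a single query to `F` on a vector whose first `S.card` coordinates enumerate `S`. -/
noncomputable def flatten {D A : Type*} [DecidableEq D] [Inhabited D] [Inhabited A] (t : ℕ)
    (F : (S : Finset (Fin t → D)) → PMF ({Q // Q ∈ S} → (Fin t → A)))
    (S : Finset D) : PMF ({x // x ∈ S} → A) :=
  (F {padVec t S}).map (fun f x =>
    if h : S.toList.idxOf x.1 < t then
      f ⟨padVec t S, Finset.mem_singleton_self _⟩ ⟨S.toList.idxOf x.1, h⟩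
    else default)


/-- `(1-ε)`-linearity of a `t`-repeated non-signaling function over `{0,1}^n`. -/
def IsLinearRep {n t : ℕ} (ε : ℝ) (k : ℕ)
    (F : (S : Finset (Fin t → (Fin n → ZMod 2))) → PMF ({Q // Q ∈ S} → (Fin t → ZMod 2))) :
    Prop :=
  ∀ (X Y : Fin t → Fin n → ZMod 2) (S : Finset (Fin t → (Fin n → ZMod 2)))
    (hX : X ∈ S) (hY : Y ∈ S) (hXY : X + Y ∈ S), S.card ≤ k →
    prob (F S) {f | ∀ j : Fin t, f ⟨X, hX⟩ j + f ⟨Y, hY⟩ j = f ⟨X + Y, hXY⟩ j} ≥ 1 - ε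

open Finset

section Prob

variable {α : Type*} (p : PMF α)

lemma PMF.toOuterMeasure_apply_le_one (E : Set α) : p.toOuterMeasure E ≤ 1 :=
  (p.toOuterMeasure.mono (Set.subset_univ E)).trans_eq
    ((p.toOuterMeasure_apply_eq_one_iff _).2 (Set.subset_univ _))

lemma PMF.toOuterMeasure_apply_ne_top (E : Set α) : p.toOuterMeasure E ≠ ⊤ :=
  ne_top_of_le_ne_top ENNReal.one_ne_top (p.toOuterMeasure_apply_le_one E)

lemma prob_le_one (E : Set α) : prob p E ≤ 1 :=
  ENNReal.toReal_le_of_le_ofReal zero_le_one (by simpa using p.toOuterMeasure_apply_le_one E)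

lemma prob_mono {E E' : Set α} (h : E ⊆ E') : prob p E ≤ prob p E' :=
  ENNReal.toReal_mono (p.toOuterMeasure_apply_ne_top E') (p.toOuterMeasure.mono h)

lemma prob_map {β : Type*} (g : α → β) (E : Set β) : prob (p.map g) E = prob p (g ⁻¹' E) :=
  congrArg ENNReal.toReal (PMF.toOuterMeasure_map_apply g p E)

lemma prob_empty : prob p ∅ = 0 := by simp [prob]

lemma prob_eq_one {E : Set α} (h : ↑p.support ⊆ E) : prob p E = 1 := by
  rw [prob, (p.toOuterMeasure_apply_eq_one_iff E).2 h, ENNReal.toReal_one]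

lemma prob_pos {E : Set α} {a : α} (ha : a ∈ E) (hs : a ∈ p.support) : 0 < prob p E := by
  refine ENNReal.toReal_pos (fun h0 => ?_) (p.toOuterMeasure_apply_ne_top E)
  exact (p.toOuterMeasure_apply_eq_zero_iff E).1 h0 |>.notMem_of_mem_left hs ha

lemma prob_add_prob_compl (E : Set α) : prob p E + prob p Eᶜ = 1 := by
  rw [prob, prob, ← ENNReal.toReal_add (p.toOuterMeasure_apply_ne_top E)
    (p.toOuterMeasure_apply_ne_top Eᶜ), PMF.toOuterMeasure_apply, PMF.toOuterMeasure_apply,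
    ← ENNReal.tsum_add]
  have : ∀ a, E.indicator p a + Eᶜ.indicator p a = p a := fun a => by
    by_cases h : a ∈ E <;> simp [h]
  simp_rw [this, p.tsum_coe, ENNReal.toReal_one]

lemma prob_union_le (E E' : Set α) : prob p (E ∪ E') ≤ prob p E + prob p E' := by
  rw [prob, prob, prob, ← ENNReal.toReal_add (p.toOuterMeasure_apply_ne_top E)
    (p.toOuterMeasure_apply_ne_top E')]
  exact ENNReal.toReal_mono (by simp [PMF.toOuterMeasure_apply_ne_top])
    (MeasureTheory.measure_union_le (μ := p.toOuterMeasure) E E')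

lemma prob_add_prob_sub_one_le_prob_inter (E E' : Set α) :
    prob p E + prob p E' - 1 ≤ prob p (E ∩ E') := by
  have h := prob_union_le p Eᶜ E'ᶜ
  rw [← Set.compl_inter] at h
  linarith [prob_add_prob_compl p E, prob_add_prob_compl p E', prob_add_prob_compl p (E ∩ E')]

lemma prob_inter_of_prob_eq_one {E' : Set α} (h : prob p E' = 1) (E : Set α) :
    prob p (E ∩ E') = prob p E :=
  le_antisymm (prob_mono p Set.inter_subset_left)
    (by linarith [prob_add_prob_sub_one_le_prob_inter p E E'])

lemma abs_prob_preimage_sub_le {β : Type*} {g₁ g₂ : α → β} {G : Set α}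
    (h : ∀ a ∈ G, g₁ a = g₂ a) (E : Set β) :
    |prob p (g₁ ⁻¹' E) - prob p (g₂ ⁻¹' E)| ≤ 1 - prob p G := by
  have key : ∀ X Y : Set α, X ∩ G ⊆ Y → prob p X - prob p Y ≤ 1 - prob p G := by
    intro X Y hXY
    have hX : X ⊆ (X ∩ G) ∪ Gᶜ := fun a ha => (em (a ∈ G)).imp (⟨ha, ·⟩) id
    linarith [(prob_mono p hX).trans (prob_union_le p _ _), prob_mono p hXY,
      prob_add_prob_compl p G]
  refine abs_sub_le_iff.2 ⟨key _ _ ?_, key _ _ ?_⟩ <;> rintro a ⟨ha, haG⟩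
  · rw [Set.mem_preimage, ← h a haG]
    exact ha
  · rw [Set.mem_preimage, h a haG]
    exact ha

end Prob

theorem IsNonSignaling.prob_preimage_restrictAssign_eq {D A : Type*} [DecidableEq D] {k : ℕ}
    {F : (S : Finset D) → PMF ({x // x ∈ S} → A)} (hns : IsNonSignaling k F)
    {S T : Finset D} (hS : S.card ≤ k) (hT : T.card ≤ k) (E : Set ({x // x ∈ S ∩ T} → A)) :
    prob (F S) (restrictAssign inter_subset_left ⁻¹' E) =
      prob (F T) (restrictAssign inter_subset_right ⁻¹' E) := by
  rw [← prob_map, ← prob_map]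
  exact congrArg (prob · E) (hns S T hS hT)

section PermQ

variable {t : ℕ} {β : Type*}

@[simp]
lemma permQ_one (Q : Fin t → β) : permQ 1 Q = Q := rfl

@[simp]
lemma permQ_inv_permQ (ρ : Equiv.Perm (Fin t)) (Q : Fin t → β) : permQ ρ⁻¹ (permQ ρ Q) = Q := by
  funext j
  simp [permQ]

@[simp]
lemma permQ_permQ_inv (ρ : Equiv.Perm (Fin t)) (Q : Fin t → β) : permQ ρ (permQ ρ⁻¹ Q) = Q := by
  simpa using permQ_inv_permQ ρ⁻¹ Q

end PermQ

section Repeated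

variable {t k : ℕ} {D A : Type*} [DecidableEq D]
  {F : (S : Finset (Fin t → D)) → PMF ({Q // Q ∈ S} → (Fin t → A))}

/-- Folding `permQ ρ Q` back by `ρ⁻¹` collapses the query set to `{Q}`: answers `b₀` to `Q` and
`b₁` to `permQ ρ Q` become two answers `b₀`, `permQ ρ⁻¹ b₁` to the same query, which must agree. -/
theorem IsPermFolded.support_subset (hfold : IsPermFolded k F) (hk : 2 ≤ k)
    (Q : Fin t → D) (ρ : Equiv.Perm (Fin t))
    (hQ : Q ∈ image ![Q, permQ ρ Q] univ) (hρQ : permQ ρ Q ∈ image ![Q, permQ ρ Q] univ) :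
    ↑(F (image ![Q, permQ ρ Q] univ)).support ⊆
      {f | f ⟨permQ ρ Q, hρQ⟩ = permQ ρ (f ⟨Q, hQ⟩)} := by
  intro f hf
  by_contra hne
  have key := hfold 2 ![Q, permQ ρ Q] ![1, ρ⁻¹] ![f ⟨Q, hQ⟩, f ⟨permQ ρ Q, hρQ⟩] hk
  have hf_mem : f ∈ {g : {R // R ∈ image ![Q, permQ ρ Q] univ} → (Fin t → A) |
      ∀ i : Fin 2, g ⟨![Q, permQ ρ Q] i, mem_image_of_mem _ (mem_univ i)⟩ =
        ![f ⟨Q, hQ⟩, f ⟨permQ ρ Q, hρQ⟩] i} := by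
    intro i
    fin_cases i <;> rfl
  refine (prob_pos _ hf_mem hf).ne' (key.trans ?_)
  convert prob_empty _
  refine Set.eq_empty_of_forall_notMem fun g hg => hne ?_
  have h0 := hg 0
  have h1 := hg 1
  simp only [Matrix.cons_val_zero, Matrix.cons_val_one, permQ_one, permQ_inv_permQ] at h0 h1
  show f ⟨permQ ρ Q, hρQ⟩ = permQ ρ (f ⟨Q, hQ⟩)
  rw [← h0, h1, permQ_permQ_inv]

theorem IsPermFolded.prob_permQ_eq_one (hfold : IsPermFolded k F) (hns : IsNonSignaling k F)
    (hk : 2 ≤ k) {U : Finset (Fin t → D)} (hU : U.card ≤ k) {Q : Fin t → D}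
    (ρ : Equiv.Perm (Fin t)) (hQ : Q ∈ U) (hρQ : permQ ρ Q ∈ U) :
    prob (F U) {f | f ⟨permQ ρ Q, hρQ⟩ = permQ ρ (f ⟨Q, hQ⟩)} = 1 := by
  have hQV : Q ∈ image ![Q, permQ ρ Q] univ := mem_image_of_mem _ (mem_univ 0)
  have hρQV : permQ ρ Q ∈ image ![Q, permQ ρ Q] univ := mem_image_of_mem _ (mem_univ 1)
  have hV : (image ![Q, permQ ρ Q] univ).card ≤ k := card_image_le.trans (by simpa using hk)
  refine (hns.prob_preimage_restrictAssign_eq hU hV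
    {g | g ⟨permQ ρ Q, mem_inter.2 ⟨hρQ, hρQV⟩⟩ = permQ ρ (g ⟨Q, mem_inter.2 ⟨hQ, hQV⟩⟩)}).trans ?_
  exact prob_eq_one _ (hfold.support_subset hk Q ρ hQV hρQV)

theorem IsConsistentRep.nonneg [Nonempty D] {ε : ℝ} (hcons : IsConsistentRep ε F) : 0 ≤ ε := by
  obtain ⟨d⟩ := ‹Nonempty D›
  linarith [(hcons (fun _ => d) (fun _ => d)).le.trans (prob_le_one _ _)]

theorem IsConsistentRep.le_prob {ε : ℝ} (hcons : IsConsistentRep ε F) (hns : IsNonSignaling k F)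
    (hk : 2 ≤ k) {U : Finset (Fin t → D)} (hU : U.card ≤ k) {Q Q' : Fin t → D}
    (hQ : Q ∈ U) (hQ' : Q' ∈ U) :
    1 - ε ≤ prob (F U) {f | ∀ j, Q j = Q' j → f ⟨Q, hQ⟩ j = f ⟨Q', hQ'⟩ j} :=
  (hcons Q Q').trans_eq (hns.prob_preimage_restrictAssign_eq (card_le_two.trans hk) hU
    {g | ∀ j, Q j = Q' j →
      g ⟨Q, mem_inter.2 ⟨by simp, hQ⟩⟩ j = g ⟨Q', mem_inter.2 ⟨by simp, hQ'⟩⟩ j})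

/-- `Q` and `permQ τ R` agree at the coordinates `i x`, so consistency ties the answers to `Q`
and to `permQ τ R` there, and folding identifies the latter with the answers to `R` at `j x`. -/
theorem le_prob_answers_agree {ε : ℝ} (hns : IsNonSignaling k F) (hfold : IsPermFolded k F)
    (hcons : IsConsistentRep ε F) (hk : 2 ≤ k) {U : Finset (Fin t → D)} (hU : U.card ≤ k)
    {ι : Type*} {i j : ι → Fin t} {τ : Equiv.Perm (Fin t)} (hτ : ∀ x, τ (i x) = j x)
    {Q R : Fin t → D} (hQR : ∀ x, Q (i x) = R (j x))
    (hQ : Q ∈ U) (hR : R ∈ U) (hτR : permQ τ R ∈ U) :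
    1 - ε ≤ prob (F U) {f | ∀ x, f ⟨Q, hQ⟩ (i x) = f ⟨R, hR⟩ (j x)} := by
  calc 1 - ε
      ≤ prob (F U) ({f | ∀ j, Q j = permQ τ R j → f ⟨Q, hQ⟩ j = f ⟨permQ τ R, hτR⟩ j} ∩
          {f | f ⟨permQ τ R, hτR⟩ = permQ τ (f ⟨R, hR⟩)}) := by
        rw [prob_inter_of_prob_eq_one _ (hfold.prob_permQ_eq_one hns hk hU τ hR hτR)]
        exact hcons.le_prob hns hk hU hQ hτR
    _ ≤ _ := prob_mono _ <| by
        rintro f ⟨hc, hf⟩ x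
        rw [hc (i x) (by simp [permQ, hτ, hQR]), hf]
        simp [permQ, hτ]

end Repeated

section Flatten

variable {D : Type*} [DecidableEq D] {t : ℕ}

/-- The position of `a ∈ S` in the query vector `padVec t S`. -/
noncomputable def flatIndex {S : Finset D} (hS : S.card ≤ t) (a : {x // x ∈ S}) : Fin t :=
  ⟨S.toList.idxOf a.1, (List.idxOf_lt_length_iff.2 (mem_toList.2 a.2)).trans_le
    (by rwa [length_toList])⟩

lemma flatIndex_injective {S : Finset D} (hS : S.card ≤ t) : Function.Injective (flatIndex hS) :=
  fun a _ h => Subtype.ext <| (List.idxOf_inj (mem_toList.2 a.2)).1 (congrArg Fin.val h)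

@[simp]
lemma padVec_flatIndex [Inhabited D] {S : Finset D} (hS : S.card ≤ t) (a : {x // x ∈ S}) :
    padVec t S (flatIndex hS a) = a := by
  have hl : S.toList.idxOf a.1 < S.toList.length :=
    List.idxOf_lt_length_iff.2 (mem_toList.2 a.2)
  exact (dif_pos hl).trans (List.idxOf_get hl)

variable {A : Type*} [Inhabited D] [Inhabited A]
  {F : (S : Finset (Fin t → D)) → PMF ({Q // Q ∈ S} → (Fin t → A))}

lemma flatten_eq_map {S : Finset D} (hS : S.card ≤ t) :
    flatten t F S = (F {padVec t S}).map
      (fun f a => f ⟨padVec t S, mem_singleton_self _⟩ (flatIndex hS a)) := by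
  unfold flatten
  congr
  funext f a
  exact dif_pos (flatIndex hS a).2

theorem prob_flatten {k : ℕ} (hns : IsNonSignaling k F) {S : Finset D} (hS : S.card ≤ t)
    {U : Finset (Fin t → D)} (hU : U.card ≤ k) (hSU : padVec t S ∈ U)
    (E : Set ({x // x ∈ S} → A)) :
    prob (flatten t F S) E =
      prob (F U) {f | (fun a => f ⟨padVec t S, hSU⟩ (flatIndex hS a)) ∈ E} := by
  rw [flatten_eq_map hS, prob_map]
  exact hns.prob_preimage_restrictAssign_eq
    ((card_singleton _).trans_le ((card_pos.2 ⟨_, hSU⟩).trans_le hU)) hU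
    {g | (fun a => g ⟨padVec t S, mem_inter.2 ⟨mem_singleton_self _, hSU⟩⟩ (flatIndex hS a)) ∈ E}

end Flatten

theorem isAlmostNonSignaling_flatten {t k : ℕ} {D A : Type*} [DecidableEq D] [Inhabited D]
    [Inhabited A] {ε : ℝ} {F : (S : Finset (Fin t → D)) → PMF ({Q // Q ∈ S} → (Fin t → A))}
    (hk : 3 ≤ k) (hns : IsNonSignaling k F) (hfold : IsPermFolded k F)
    (hcons : IsConsistentRep ε F) :
    IsAlmostNonSignaling ε t (flatten t F) := by
  intro S T hS hT E
  set iS : {x // x ∈ S ∩ T} → Fin t := fun x => flatIndex hS ⟨x, (mem_inter.1 x.2).1⟩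
  set iT : {x // x ∈ S ∩ T} → Fin t := fun x => flatIndex hT ⟨x, (mem_inter.1 x.2).2⟩
  obtain ⟨τ, hτ⟩ := Equiv.Perm.exists_extending_pair iS iT
    (fun a b h => Subtype.ext (Subtype.mk.inj (flatIndex_injective hS h)))
    (fun a b h => Subtype.ext (Subtype.mk.inj (flatIndex_injective hT h)))
  set U : Finset (Fin t → D) := {padVec t S, padVec t T, permQ τ (padVec t T)}
  have hU : U.card ≤ k := card_le_three.trans hk
  have hSU : padVec t S ∈ U := by simp [U]
  have hTU : padVec t T ∈ U := by simp [U]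
  have hτU : permQ τ (padVec t T) ∈ U := by simp [U]
  have hagree := le_prob_answers_agree hns hfold hcons (by omega) hU hτ
    (fun _ => by simp only [iS, iT, padVec_flatIndex]) hSU hTU hτU
  rw [marginal, marginal, prob_map, prob_map, prob_flatten hns hS hU hSU,
    prob_flatten hns hT hU hTU]
  have key := abs_prob_preimage_sub_le (F U) (g₁ := fun f x => f ⟨_, hSU⟩ (iS x))
    (g₂ := fun f x => f ⟨_, hTU⟩ (iT x))
    (G := {f | ∀ x, f ⟨_, hSU⟩ (iS x) = f ⟨_, hTU⟩ (iT x)}) (fun f hf => funext hf) E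
  exact key.trans (by linarith)

/-- With `Q` the flattened query and `ix, iy, iz` the positions of `x, y, x + y`, query also
`Y`, which is `Q` with `ix, iy` swapped, and `Q + Y`. Linearity at `ix` gives
`f Q ix + f Y ix = f (Q + Y) ix`; folding turns `f Y ix` into `f Q iy`; and as
`(Q + Y) ix = x + y = Q iz`, `le_prob_answers_agree` turns `f (Q + Y) ix` into `f Q iz`. -/
theorem le_prob_flatten_add {n t k : ℕ} {ε₁ ε₂ : ℝ}
    {L : (S : Finset (Fin t → (Fin n → ZMod 2))) → PMF ({Q // Q ∈ S} → (Fin t → ZMod 2))}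
    (hk : 4 ≤ k) (hns : IsNonSignaling k L) (hfold : IsPermFolded k L)
    (hlin : IsLinearRep ε₁ k L) (hcons : IsConsistentRep ε₂ L)
    {x y : Fin n → ZMod 2} {S : Finset (Fin n → ZMod 2)} (hx : x ∈ S) (hy : y ∈ S)
    (hxy : x + y ∈ S) (hS : S.card ≤ t) :
    1 - ε₁ - ε₂ ≤ prob (flatten t L S) {f | f ⟨x, hx⟩ + f ⟨y, hy⟩ = f ⟨x + y, hxy⟩} := by
  set Q := padVec t S
  set ix := flatIndex hS ⟨x, hx⟩
  set iy := flatIndex hS ⟨y, hy⟩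
  set iz := flatIndex hS ⟨x + y, hxy⟩
  set Y := permQ (Equiv.swap ix iy) Q
  set U : Finset (Fin t → Fin n → ZMod 2) := {Q, Y, Q + Y, permQ (Equiv.swap ix iz) Q}
  have hU : U.card ≤ k := card_le_four.trans hk
  have hQU : Q ∈ U := by simp [U]
  have hYU : Y ∈ U := by simp [U]
  have hQYU : Q + Y ∈ U := by simp [U]
  have hWU : permQ (Equiv.swap ix iz) Q ∈ U := by simp [U]
  have hlinU := hlin Q Y U hQU hYU hQYU hU
  have hfoldY : prob (L U) {f | f ⟨Y, hYU⟩ = permQ (Equiv.swap ix iy) (f ⟨Q, hQU⟩)} = 1 :=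
    hfold.prob_permQ_eq_one hns (by omega) hU _ hQU hYU
  have hagree := le_prob_answers_agree (ι := Unit) (i := fun _ => ix) (j := fun _ => iz)
    hns hfold hcons (by omega) hU (fun _ => Equiv.swap_apply_left ix iz)
    (fun _ => by simp [Q, Y, ix, iy, iz, permQ]) hQYU hQU hWU
  rw [prob_flatten hns hS hU hQU]
  calc 1 - ε₁ - ε₂
      ≤ prob (L U) (({f | ∀ j, f ⟨Q, hQU⟩ j + f ⟨Y, hYU⟩ j = f ⟨Q + Y, hQYU⟩ j} ∩
          {f | ∀ _ : Unit, f ⟨Q + Y, hQYU⟩ ix = f ⟨Q, hQU⟩ iz}) ∩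
            {f | f ⟨Y, hYU⟩ = permQ (Equiv.swap ix iy) (f ⟨Q, hQU⟩)}) := by
        rw [prob_inter_of_prob_eq_one _ hfoldY]
        refine le_trans ?_ (prob_add_prob_sub_one_le_prob_inter _ _ _)
        linarith
    _ ≤ _ := prob_mono _ <| by
        rintro f ⟨⟨hf_add, hf_agree⟩, hf_fold⟩
        have h := hf_add ix
        rw [hf_fold, hf_agree ()] at h
        simpa [permQ] using h

/-- for `k ≥ 4`, the flattening of a permutation-folded, `(1-ε₁)`-linear,
`(1-ε₂)`-consistent `t`-repeated `k`-non-signaling function over `{0,1}^n` is an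
`(ε₂, t)`-almost-non-signaling function that is `(1-ε₁-3ε₂)`-linear. -/
theorem flatten_linear {n t k : ℕ} (ε₁ ε₂ : ℝ)
    (L : (S : Finset (Fin t → (Fin n → ZMod 2))) → PMF ({Q // Q ∈ S} → (Fin t → ZMod 2)))
    (hk : 4 ≤ k)
    (hns : IsNonSignaling k L)
    (hfold : IsPermFolded k L)
    (hlin : IsLinearRep ε₁ k L)
    (hcons : IsConsistentRep ε₂ L) :
    IsAlmostNonSignaling ε₂ t (flatten t L) ∧
      (∀ (x y : Fin n → ZMod 2) (S : Finset (Fin n → ZMod 2))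
        (hx : x ∈ S) (hy : y ∈ S) (hxy : x + y ∈ S), S.card ≤ t →
        prob (flatten t L S)
          {f | f ⟨x, hx⟩ + f ⟨y, hy⟩ = f ⟨x + y, hxy⟩} ≥ 1 - ε₁ - 3 * ε₂) := by
  refine ⟨isAlmostNonSignaling_flatten (by omega) hns hfold hcons, ?_⟩
  intro x y S hx hy hxy hS
  linarith [hcons.nonneg, le_prob_flatten_add hk hns hfold hlin hcons hx hy hxy hS]
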